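/- Let θ, φ : [0,1] → ℝ be continuously differentiable, with θ not identically zero, the zero set of φ consisting of at most isolated points, and such that C_{θ,φ} is a copula (conditions (a)–(d)). Then C_{θ,φ} is totally positive of order 2, i.e. C_{θ,φ}(u₁,v₁)·C_{θ,φ}(u₂,v₂) − C_{θ,φ}(u₁,v₂)·C_{θ,φ}(u₂,v₁) ≥ 0 for all 0 ≤ u₁ ≤ u₂ ≤ 1 and 0 ≤ v₁ ≤ v₂ ≤ 1 (left corner set decreasing), if and only if the map u ↦ C_{θ,φ}(u,v)/u is non-increasing on (0,1] for every v ∈ [0,1] (left tail decreasing). -/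

import Mathlib

/-- A bivariate copula on `[0,1]²`, given as a function `ℝ → ℝ → ℝ`. -/
def IsCopula (C : ℝ → ℝ → ℝ) : Prop :=
  (∀ u ∈ Set.Icc (0:ℝ) 1, C u 0 = 0 ∧ C 0 u = 0) ∧
  (∀ u ∈ Set.Icc (0:ℝ) 1, C u 1 = u ∧ C 1 u = u) ∧
  (∀ u₁ u₂ v₁ v₂ : ℝ, 0 ≤ u₁ → u₁ ≤ u₂ → u₂ ≤ 1 → 0 ≤ v₁ → v₁ ≤ v₂ → v₂ ≤ 1 →
    C u₂ v₂ - C u₂ v₁ - C u₁ v₂ + C u₁ v₁ ≥ 0)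

/-!
TP2 implies LTD for every copula: take `v₂ = 1` and use `C(u, 1) = u`.

Conversely, minors of adjacent rectangles compose, so for the symmetric kernel `C = C_{θ,φ}` it
suffices to treat rectangles lying above the diagonal and squares `[s, t]²`. Above the diagonal
`C(u, v) = u v + φ(u) (θφ)(v)` has rank two, so the minor factors as
`(u₂ φ(u₁) - u₁ φ(u₂)) (v₂ (θφ)(v₁) - v₁ (θφ)(v₂))`, and LTD controls the signs of both factors.
On a square, `C` is the sum of the Gram matrix of `(s, t)` and of
`[[θ(s) φ(s)², θ(t) φ(s) φ(t)], [θ(t) φ(s) φ(t), θ(t) φ(t)²]]`. The latter is positive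
semidefinite because LTD gives `θ φ² ≥ 0` and `θ` is non-increasing: the `C`-volume of
`[x, x + h]²` is `-θ'(x) φ(x)² h + o(h)`, so `θ' ≤ 0` off the zeros of `φ`, and at the isolated
zeros by continuity of `θ'`.
-/

open Set Filter Topology

def TP2At (C : ℝ → ℝ → ℝ) (u₁ u₂ v₁ v₂ : ℝ) : Prop :=
  C u₁ v₂ * C u₂ v₁ ≤ C u₁ v₁ * C u₂ v₂

def IsTP2 (C : ℝ → ℝ → ℝ) : Prop :=
  ∀ u₁ u₂ v₁ v₂ : ℝ, 0 ≤ u₁ → u₁ ≤ u₂ → u₂ ≤ 1 → 0 ≤ v₁ → v₁ ≤ v₂ → v₂ ≤ 1 →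
    TP2At C u₁ u₂ v₁ v₂

def IsLeftTailDecreasing (C : ℝ → ℝ → ℝ) : Prop :=
  ∀ v ∈ Icc (0:ℝ) 1, AntitoneOn (fun u => C u v / u) (Ioc 0 1)

lemma TP2At.symm {C : ℝ → ℝ → ℝ} (hsymm : ∀ u v, C u v = C v u) {u₁ u₂ v₁ v₂ : ℝ}
    (h : TP2At C u₁ u₂ v₁ v₂) : TP2At C v₁ v₂ u₁ u₂ := by
  unfold TP2At at *
  rwa [hsymm v₁ u₂, hsymm v₂ u₁, hsymm v₁ u₁, hsymm v₂ u₂, mul_comm (C u₂ v₁)]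

lemma IsLeftTailDecreasing.mul_le {C : ℝ → ℝ → ℝ} (hL : IsLeftTailDecreasing C)
    {a b v : ℝ} (ha : 0 < a) (hab : a ≤ b) (hb : b ≤ 1) (hv : v ∈ Icc (0:ℝ) 1) :
    a * C b v ≤ b * C a v := by
  have h : C b v / b ≤ C a v / a :=
    hL v hv ⟨ha, hab.trans hb⟩ ⟨ha.trans_le hab, hb⟩ hab
  rwa [div_le_div_iff₀ (ha.trans_le hab) ha, mul_comm (C b v), mul_comm (C a v)] at h

namespace IsCopula

variable {C : ℝ → ℝ → ℝ}

lemma nonneg (hC : IsCopula C) {u v : ℝ} (hu : u ∈ Icc (0:ℝ) 1) (hv : v ∈ Icc (0:ℝ) 1) :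
    0 ≤ C u v := by
  have h := hC.2.2 0 u 0 v le_rfl hu.1 hu.2 le_rfl hv.1 hv.2
  linarith [(hC.1 v hv).2, (hC.1 u hu).1, (hC.1 0 ⟨le_rfl, zero_le_one⟩).1]

lemma monotoneOn_left (hC : IsCopula C) {v : ℝ} (hv : v ∈ Icc (0:ℝ) 1) :
    MonotoneOn (C · v) (Icc 0 1) := by
  intro u hu u' hu' huu'
  have h := hC.2.2 u u' 0 v hu.1 huu' hu'.2 le_rfl hv.1 hv.2
  linarith [(hC.1 u hu).1, (hC.1 u' hu').1]

lemma monotoneOn_right (hC : IsCopula C) {u : ℝ} (hu : u ∈ Icc (0:ℝ) 1) :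
    MonotoneOn (C u) (Icc 0 1) := by
  intro v hv v' hv' hvv'
  have h := hC.2.2 0 u v v' le_rfl hu.1 hu.2 hv.1 hvv' hv'.2
  linarith [(hC.1 v hv).2, (hC.1 v' hv').2]

lemma isLeftTailDecreasing_of_isTP2 (hC : IsCopula C) (hT : IsTP2 C) : IsLeftTailDecreasing C := by
  intro v hv a ha b hb hab
  have h : C a 1 * C b v ≤ C a v * C b 1 := hT a b v 1 ha.1.le hab hb.2 hv.1 hv.2 le_rfl
  rw [(hC.2.1 a ⟨ha.1.le, ha.2⟩).1, (hC.2.1 b ⟨hb.1.le, hb.2⟩).1] at h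
  rw [div_le_div_iff₀ hb.1 ha.1]
  linarith

lemma tp2At_zero_left (hC : IsCopula C) {u₂ v₁ v₂ : ℝ} (hv₁ : v₁ ∈ Icc (0:ℝ) 1)
    (hv₂ : v₂ ∈ Icc (0:ℝ) 1) :
    TP2At C 0 u₂ v₁ v₂ := by
  simp [TP2At, (hC.1 v₁ hv₁).2, (hC.1 v₂ hv₂).2]

lemma tp2At_zero_right (hC : IsCopula C) {u₁ u₂ v₂ : ℝ} (hu₁ : u₁ ∈ Icc (0:ℝ) 1)
    (hu₂ : u₂ ∈ Icc (0:ℝ) 1) :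
    TP2At C u₁ u₂ 0 v₂ := by
  simp [TP2At, (hC.1 u₁ hu₁).1, (hC.1 u₂ hu₂).1]

lemma tp2At_trans (hC : IsCopula C) {u₁ w u₂ v₁ v₂ : ℝ} (hu₁ : 0 ≤ u₁) (h₁ : u₁ ≤ w) (h₂ : w ≤ u₂)
    (hu₂ : u₂ ≤ 1) (hv₁ : 0 ≤ v₁) (hv : v₁ ≤ v₂) (hv₂ : v₂ ≤ 1)
    (T₁ : TP2At C u₁ w v₁ v₂) (T₂ : TP2At C w u₂ v₁ v₂) : TP2At C u₁ u₂ v₁ v₂ := by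
  have mu₁ : u₁ ∈ Icc (0:ℝ) 1 := ⟨hu₁, by linarith⟩
  have mw : w ∈ Icc (0:ℝ) 1 := ⟨by linarith, by linarith⟩
  have mu₂ : u₂ ∈ Icc (0:ℝ) 1 := ⟨by linarith, hu₂⟩
  have mv₁ : v₁ ∈ Icc (0:ℝ) 1 := ⟨hv₁, by linarith⟩
  have mv₂ : v₂ ∈ Icc (0:ℝ) 1 := ⟨by linarith, hv₂⟩
  have ha₂ : C u₁ v₂ ≤ C w v₂ := hC.monotoneOn_left mv₂ mu₁ mw h₁
  have hb : C w v₁ ≤ C w v₂ := hC.monotoneOn_right mw mv₁ mv₂ hv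
  have hc₁ := hC.nonneg mu₂ mv₁
  unfold TP2At at *
  rcases (hC.nonneg mw mv₁).eq_or_lt with hb₁ | hb₁
  · calc C u₁ v₂ * C u₂ v₁ ≤ C w v₂ * C u₂ v₁ := mul_le_mul_of_nonneg_right ha₂ hc₁
      _ ≤ C w v₁ * C u₂ v₂ := T₂
      _ = 0 := by rw [← hb₁, zero_mul]
      _ ≤ C u₁ v₁ * C u₂ v₂ := mul_nonneg (hC.nonneg mu₁ mv₁) (hC.nonneg mu₂ mv₂)
  · have hpos : 0 < C w v₁ * C w v₂ := mul_pos hb₁ (hb₁.trans_le hb)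
    refine le_of_mul_le_mul_left ?_ hpos
    calc C w v₁ * C w v₂ * (C u₁ v₂ * C u₂ v₁)
        = (C u₁ v₂ * C w v₁) * (C w v₂ * C u₂ v₁) := by ring
      _ ≤ (C u₁ v₁ * C w v₂) * (C w v₁ * C u₂ v₂) :=
          mul_le_mul T₁ T₂ (mul_nonneg (hC.nonneg mw mv₂) hc₁)
            (mul_nonneg (hC.nonneg mu₁ mv₁) (hC.nonneg mw mv₂))
      _ = C w v₁ * C w v₂ * (C u₁ v₁ * C u₂ v₂) := by ring

lemma isTP2_of_symm (hC : IsCopula C) (hsymm : ∀ u v, C u v = C v u)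
    (hoff : ∀ u₁ u₂ v₁ v₂, 0 < u₁ → u₁ ≤ u₂ → u₂ ≤ v₁ → v₁ ≤ v₂ → v₂ ≤ 1 →
      TP2At C u₁ u₂ v₁ v₂)
    (hdiag : ∀ s t, 0 < s → s ≤ t → t ≤ 1 → TP2At C s t s t) : IsTP2 C := by
  have key : ∀ u₁ u₂ v₁ v₂, 0 < u₁ → u₁ ≤ v₁ → u₁ ≤ u₂ → u₂ ≤ 1 → v₁ ≤ v₂ → v₂ ≤ 1 →
      TP2At C u₁ u₂ v₁ v₂ := by
    -- cut at `v₁`, then at `u₂` or `v₂`, into rectangles off the diagonal and a diagonal square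
    intro u₁ u₂ v₁ v₂ hu₁ huv hu hu₂ hv hv₂
    have hv₁ : 0 < v₁ := hu₁.trans_le huv
    rcases le_total u₂ v₁ with h | h
    · exact hoff _ _ _ _ hu₁ hu h hv hv₂
    refine hC.tp2At_trans hu₁.le huv h hu₂ hv₁.le hv hv₂ (hoff _ _ _ _ hu₁ huv le_rfl hv hv₂) ?_
    rcases le_total u₂ v₂ with h' | h'
    · refine (hC.tp2At_trans hv₁.le h h' hv₂ hv₁.le h hu₂ (hdiag _ _ hv₁ h hu₂) ?_).symm hsymm
      exact (hoff _ _ _ _ hv₁ h le_rfl h' hv₂).symm hsymm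
    · exact hC.tp2At_trans hv₁.le hv h' hu₂ hv₁.le hv hv₂ (hdiag _ _ hv₁ hv hv₂)
        ((hoff _ _ _ _ hv₁ hv le_rfl h' hu₂).symm hsymm)
  intro u₁ u₂ v₁ v₂ hu₁ hu hu₂ hv₁ hv hv₂
  rcases hu₁.eq_or_lt with rfl | hu₁
  · exact hC.tp2At_zero_left ⟨hv₁, hv.trans hv₂⟩ ⟨hv₁.trans hv, hv₂⟩
  rcases hv₁.eq_or_lt with rfl | hv₁
  · exact hC.tp2At_zero_right ⟨hu₁.le, hu.trans hu₂⟩ ⟨hu₁.le.trans hu, hu₂⟩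
  rcases le_total u₁ v₁ with h | h
  · exact key _ _ _ _ hu₁ h hu hu₂ hv hv₂
  · exact (key _ _ _ _ hv₁ h hv hv₂ hu hu₂).symm hsymm

end IsCopula

lemma sq_add_le_mul_add_mul {a b c a' b' c' : ℝ} (ha : 0 ≤ a) (hc : 0 ≤ c) (h : b ^ 2 ≤ a * c)
    (ha' : 0 ≤ a') (hc' : 0 ≤ c') (h' : b' ^ 2 ≤ a' * c') :
    (b + b') ^ 2 ≤ (a + a') * (c + c') := by
  have hcross : 2 * b * b' ≤ a * c' + a' * c := by
    apply le_of_sq_le_sq _ (by positivity)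
    nlinarith [mul_le_mul h h' (sq_nonneg b') (mul_nonneg ha hc), sq_nonneg (a * c' - a' * c)]
  nlinarith

def thetaPhi (θ φ : ℝ → ℝ) (u v : ℝ) : ℝ := u * v + θ (max u v) * φ u * φ v

section
variable {θ φ : ℝ → ℝ}

lemma thetaPhi_comm (u v : ℝ) : thetaPhi θ φ u v = thetaPhi θ φ v u := by
  rw [thetaPhi, thetaPhi, max_comm]; ring

lemma thetaPhi_of_le {u v : ℝ} (h : u ≤ v) : thetaPhi θ φ u v = u * v + φ u * (θ v * φ v) := by
  rw [thetaPhi, max_eq_right h]; ring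

lemma thetaPhi_self (u : ℝ) : thetaPhi θ φ u u = u ^ 2 + θ u * φ u ^ 2 := by
  rw [thetaPhi, max_self]; ring

end

namespace IsLeftTailDecreasing

variable {θ φ : ℝ → ℝ}

lemma theta_mul_phi_sq_nonneg (hC : IsCopula (thetaPhi θ φ))
    (hL : IsLeftTailDecreasing (thetaPhi θ φ)) {t : ℝ} (ht : 0 < t) (ht₁ : t ≤ 1) :
    0 ≤ θ t * φ t ^ 2 := by
  have h := hL.mul_le ht ht₁ le_rfl ⟨ht.le, ht₁⟩
  rw [(hC.2.1 t ⟨ht.le, ht₁⟩).2, thetaPhi_self] at h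
  linear_combination h

lemma theta_phi_mul_sub_nonneg (hL : IsLeftTailDecreasing (thetaPhi θ φ)) {u u' v : ℝ}
    (hu : 0 < u) (huu' : u ≤ u') (hu'v : u' ≤ v) (hv : v ≤ 1) :
    0 ≤ θ v * φ v * (u' * φ u - u * φ u') := by
  have h := hL.mul_le hu huu' (hu'v.trans hv) ⟨hu.le.trans (huu'.trans hu'v), hv⟩
  rw [thetaPhi_of_le hu'v, thetaPhi_of_le (huu'.trans hu'v)] at h
  linear_combination h

lemma phi_mul_sub_nonneg (hL : IsLeftTailDecreasing (thetaPhi θ φ)) {u v v' : ℝ}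
    (hu : 0 < u) (huv : u ≤ v) (hvv' : v ≤ v') (hv' : v' ≤ 1) :
    0 ≤ φ u * (v' * (θ v * φ v) - v * (θ v' * φ v')) := by
  have h := hL.mul_le (hu.trans_le huv) hvv' hv' ⟨hu.le, huv.trans (hvv'.trans hv')⟩
  rw [thetaPhi_comm, thetaPhi_of_le (huv.trans hvv'), thetaPhi_comm, thetaPhi_of_le huv] at h
  linear_combination h

lemma phi_mul_theta_phi_pos (hC : IsCopula (thetaPhi θ φ))
    (hL : IsLeftTailDecreasing (thetaPhi θ φ)) {u v : ℝ} (hu : 0 < u) (huv : u ≤ v)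
    (hv : v ≤ 1) (hg : θ v * φ v ≠ 0) : 0 < φ u * (θ v * φ v) := by
  have h := hL.theta_phi_mul_sub_nonneg hu huv le_rfl hv
  have hdiag : 0 < θ v * φ v ^ 2 := by
    refine (hL.theta_mul_phi_sq_nonneg hC (hu.trans_le huv) hv).lt_of_ne' ?_
    rw [sq, ← mul_assoc]
    exact mul_ne_zero hg (right_ne_zero_of_mul hg)
  refine pos_of_mul_pos_right (a := v) ?_ (hu.trans_le huv).le
  linear_combination h + mul_pos hu hdiag

lemma tp2At_thetaPhi_of_le (hC : IsCopula (thetaPhi θ φ))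
    (hL : IsLeftTailDecreasing (thetaPhi θ φ)) {u₁ u₂ v₁ v₂ : ℝ} (hu₁ : 0 < u₁)
    (hu : u₁ ≤ u₂) (huv : u₂ ≤ v₁) (hv : v₁ ≤ v₂) (hv₂ : v₂ ≤ 1) :
    TP2At (thetaPhi θ φ) u₁ u₂ v₁ v₂ := by
  set X := u₂ * φ u₁ - u₁ * φ u₂
  set Y := v₂ * (θ v₁ * φ v₁) - v₁ * (θ v₂ * φ v₂)
  have hX₁ : 0 ≤ θ v₁ * φ v₁ * X := hL.theta_phi_mul_sub_nonneg hu₁ hu huv (hv.trans hv₂)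
  have hX₂ : 0 ≤ θ v₂ * φ v₂ * X := hL.theta_phi_mul_sub_nonneg hu₁ hu (huv.trans hv) hv₂
  have hY : 0 ≤ φ u₂ * Y := hL.phi_mul_sub_nonneg (hu₁.trans_le hu) huv hv hv₂
  have hXY : 0 ≤ X * Y := by
    by_cases hg : θ v₂ * φ v₂ = 0
    · have hv₂0 : 0 ≤ v₂ := by linarith
      have e : X * Y = v₂ * (θ v₁ * φ v₁ * X) := by simp only [Y, hg]; ring
      exact e ▸ mul_nonneg hv₂0 hX₁
    · have hpos := hL.phi_mul_theta_phi_pos hC (hu₁.trans_le hu) (huv.trans hv) hv₂ hg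
      refine nonneg_of_mul_nonneg_right ?_ hpos
      calc (0 : ℝ) ≤ θ v₂ * φ v₂ * X * (φ u₂ * Y) := mul_nonneg hX₂ hY
        _ = φ u₂ * (θ v₂ * φ v₂) * (X * Y) := by ring
  unfold TP2At
  rw [thetaPhi_of_le (huv.trans hv), thetaPhi_of_le ((hu.trans huv).trans hv),
    thetaPhi_of_le huv, thetaPhi_of_le (hu.trans huv)]
  linear_combination hXY

end IsLeftTailDecreasing

namespace IsCopula

variable {θ φ : ℝ → ℝ}

lemma deriv_theta_mul_phi_sq_nonpos (hC : IsCopula (thetaPhi θ φ)) {x : ℝ} (hx₀ : 0 ≤ x)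
    (hx₁ : x < 1) (hθ : DifferentiableAt ℝ θ x) (hφ : DifferentiableAt ℝ φ x) :
    deriv θ x * φ x ^ 2 ≤ 0 := by
  -- `F y` is the `C`-volume of `[x, y]²`; it vanishes at `x` and is nonnegative to its right
  set F : ℝ → ℝ := fun y => (y - x) ^ 2 + θ y * (φ y - φ x) ^ 2 - (θ y - θ x) * φ x ^ 2
  have hF : HasDerivAt F (-(deriv θ x * φ x ^ 2)) x := by
    have h := (((hasDerivAt_id x).sub_const x).pow 2).add
      (hθ.hasDerivAt.mul ((hφ.hasDerivAt.sub_const (φ x)).pow 2)) |>.sub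
      ((hθ.hasDerivAt.sub_const (θ x)).mul_const (φ x ^ 2))
    exact h.congr_deriv (by simp)
  have hvol : ∀ y ∈ Ioc x 1, 0 ≤ F y := by
    intro y hy
    have h := hC.2.2 x y x y hx₀ hy.1.le hy.2 hx₀ hy.1.le hy.2
    rw [thetaPhi_self, thetaPhi_self, thetaPhi_of_le hy.1.le, thetaPhi_comm,
      thetaPhi_of_le hy.1.le] at h
    simp only [F]
    linear_combination h
  have hslope : Tendsto (slope F x) (𝓝[>] x) (𝓝 (-(deriv θ x * φ x ^ 2))) :=
    (hasDerivAt_iff_tendsto_slope.1 hF).mono_left (nhdsWithin_mono _ (by simp))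
  have hlim : 0 ≤ -(deriv θ x * φ x ^ 2) := by
    refine ge_of_tendsto hslope ?_
    filter_upwards [Ioc_mem_nhdsGT hx₁] with y hy
    rw [slope_def_field]
    exact div_nonneg (by simpa [F] using hvol y hy) (sub_nonneg.2 hy.1.le)
  linarith

lemma antitoneOn_theta (hC : IsCopula (thetaPhi θ φ)) (hθ : ContDiffOn ℝ 1 θ (Icc 0 1))
    (hφ : ContDiffOn ℝ 1 φ (Icc 0 1))
    (hφiso : ∀ u ∈ Icc (0:ℝ) 1, φ u = 0 →
      ∃ ε > 0, ∀ x ∈ Icc (0:ℝ) 1, x ≠ u → |x - u| < ε → φ x ≠ 0) :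
    AntitoneOn θ (Icc 0 1) := by
  have hdiff : ∀ {f : ℝ → ℝ}, ContDiffOn ℝ 1 f (Icc 0 1) →
      ∀ x ∈ Ioo (0:ℝ) 1, DifferentiableAt ℝ f x := fun hf x hx =>
    (hf.differentiableOn one_ne_zero).differentiableAt (Icc_mem_nhds hx.1 hx.2)
  have hcont : ContinuousOn (deriv θ) (Ioo 0 1) :=
    (hθ.mono Ioo_subset_Icc_self).continuousOn_deriv_of_isOpen isOpen_Ioo le_rfl
  have hnonpos : ∀ x ∈ Ioo (0:ℝ) 1, φ x ≠ 0 → deriv θ x ≤ 0 := fun x hx hφx =>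
    nonpos_of_mul_nonpos_left
      (hC.deriv_theta_mul_phi_sq_nonpos hx.1.le hx.2 (hdiff hθ x hx) (hdiff hφ x hx))
      (by positivity)
  have hderiv : ∀ x ∈ Ioo (0:ℝ) 1, deriv θ x ≤ 0 := by
    intro x hx
    by_cases hφx : φ x = 0
    · obtain ⟨ε, hε, hiso⟩ := hφiso x (Ioo_subset_Icc_self hx) hφx
      refine le_of_tendsto
        ((hcont.continuousAt (Ioo_mem_nhds hx.1 hx.2)).tendsto.mono_left
          (nhdsWithin_le_nhds (s := Ioi x))) ?_
      filter_upwards [Ioo_mem_nhdsGT (lt_min (by linarith) hx.2 : x < min (x + ε) 1)] with y hy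
      have hy₁ : y < 1 := hy.2.trans_le (min_le_right _ _)
      have hyε : y < x + ε := hy.2.trans_le (min_le_left _ _)
      refine hnonpos y ⟨hx.1.trans hy.1, hy₁⟩ (hiso y ⟨(hx.1.trans hy.1).le, hy₁.le⟩ hy.1.ne' ?_)
      rw [abs_of_pos (sub_pos.2 hy.1)]
      linarith
    · exact hnonpos x hx hφx
  refine antitoneOn_of_deriv_nonpos (convex_Icc 0 1) hθ.continuousOn ?_ ?_ <;> rw [interior_Icc]
  · exact fun x hx => (hdiff hθ x hx).differentiableWithinAt
  · exact hderiv

end IsCopula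

lemma IsLeftTailDecreasing.tp2At_thetaPhi_diag {θ φ : ℝ → ℝ} (hC : IsCopula (thetaPhi θ φ))
    (hL : IsLeftTailDecreasing (thetaPhi θ φ)) (hθ : AntitoneOn θ (Icc 0 1)) {s t : ℝ}
    (hs : 0 < s) (hst : s ≤ t) (ht : t ≤ 1) : TP2At (thetaPhi θ φ) s t s t := by
  have hP := hL.theta_mul_phi_sq_nonneg hC hs (hst.trans ht)
  have hQ := hL.theta_mul_phi_sq_nonneg hC (hs.trans_le hst) ht
  have hR : (θ t * φ s * φ t) ^ 2 ≤ θ s * φ s ^ 2 * (θ t * φ t ^ 2) := by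
    rcases eq_or_ne (φ t) 0 with h | h
    · simp [h]
    have hθt : 0 ≤ θ t := nonneg_of_mul_nonneg_left hQ (by positivity)
    have hθst : θ t ≤ θ s := hθ ⟨hs.le, hst.trans ht⟩ ⟨(hs.trans_le hst).le, ht⟩ hst
    linear_combination mul_nonneg (mul_nonneg hθt (sub_nonneg.2 hθst)) (sq_nonneg (φ s * φ t))
  have h := sq_add_le_mul_add_mul (sq_nonneg s) (sq_nonneg t) (mul_pow s t 2).le hP hQ hR
  unfold TP2At
  rw [thetaPhi_self, thetaPhi_self, thetaPhi_of_le hst, thetaPhi_comm, thetaPhi_of_le hst]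
  linear_combination h

theorem isTP2_thetaPhi_iff {θ φ : ℝ → ℝ} (hθ : ContDiffOn ℝ 1 θ (Icc 0 1))
    (hφ : ContDiffOn ℝ 1 φ (Icc 0 1))
    (hφiso : ∀ u ∈ Icc (0:ℝ) 1, φ u = 0 →
      ∃ ε > 0, ∀ x ∈ Icc (0:ℝ) 1, x ≠ u → |x - u| < ε → φ x ≠ 0)
    (hC : IsCopula (thetaPhi θ φ)) :
    IsTP2 (thetaPhi θ φ) ↔ IsLeftTailDecreasing (thetaPhi θ φ) := by
  refine ⟨hC.isLeftTailDecreasing_of_isTP2, fun hL => ?_⟩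
  have hanti := hC.antitoneOn_theta hθ hφ hφiso
  exact hC.isTP2_of_symm thetaPhi_comm (fun _ _ _ _ => hL.tp2At_thetaPhi_of_le hC)
    (fun _ _ => hL.tp2At_thetaPhi_diag hC hanti)

theorem stmt9_general (θ φ : ℝ → ℝ)
    (hθ : ContDiffOn ℝ 1 θ (Set.Icc 0 1))
    (hφ : ContDiffOn ℝ 1 φ (Set.Icc 0 1))
    (hφiso : ∀ u ∈ Set.Icc (0:ℝ) 1, φ u = 0 →
      ∃ ε > 0, ∀ x ∈ Set.Icc (0:ℝ) 1, x ≠ u → |x - u| < ε → φ x ≠ 0)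
    (hC : IsCopula (fun u v => u * v + θ (max u v) * φ u * φ v)) :
    (∀ u₁ u₂ v₁ v₂ : ℝ, 0 ≤ u₁ → u₁ ≤ u₂ → u₂ ≤ 1 → 0 ≤ v₁ → v₁ ≤ v₂ → v₂ ≤ 1 →
        (u₁ * v₁ + θ (max u₁ v₁) * φ u₁ * φ v₁) *
          (u₂ * v₂ + θ (max u₂ v₂) * φ u₂ * φ v₂) -
        (u₁ * v₂ + θ (max u₁ v₂) * φ u₁ * φ v₂) *
          (u₂ * v₁ + θ (max u₂ v₁) * φ u₂ * φ v₁) ≥ 0) ↔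
      (∀ v ∈ Set.Icc (0:ℝ) 1,
        AntitoneOn (fun u => (u * v + θ (max u v) * φ u * φ v) / u) (Set.Ioc 0 1)) := by
  have key := isTP2_thetaPhi_iff hθ hφ hφiso hC
  exact ⟨fun hT => key.1 fun u₁ u₂ v₁ v₂ h₁ h₂ h₃ h₄ h₅ h₆ =>
      sub_nonneg.1 (hT u₁ u₂ v₁ v₂ h₁ h₂ h₃ h₄ h₅ h₆),
    fun hL u₁ u₂ v₁ v₂ h₁ h₂ h₃ h₄ h₅ h₆ => sub_nonneg.2 (key.2 hL u₁ u₂ v₁ v₂ h₁ h₂ h₃ h₄ h₅ h₆)⟩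

theorem stmt9 (θ φ : ℝ → ℝ)
    (hθ : ContDiffOn ℝ 1 θ (Set.Icc 0 1))
    (hφ : ContDiffOn ℝ 1 φ (Set.Icc 0 1))
    (hθne : ∃ u ∈ Set.Icc (0:ℝ) 1, θ u ≠ 0)
    (hφiso : ∀ u ∈ Set.Icc (0:ℝ) 1, φ u = 0 →
      ∃ ε > 0, ∀ x ∈ Set.Icc (0:ℝ) 1, x ≠ u → |x - u| < ε → φ x ≠ 0)
    (hC : IsCopula (fun u v => u * v + θ (max u v) * φ u * φ v)) :
    (∀ u₁ u₂ v₁ v₂ : ℝ, 0 ≤ u₁ → u₁ ≤ u₂ → u₂ ≤ 1 → 0 ≤ v₁ → v₁ ≤ v₂ → v₂ ≤ 1 →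
        (u₁ * v₁ + θ (max u₁ v₁) * φ u₁ * φ v₁) *
          (u₂ * v₂ + θ (max u₂ v₂) * φ u₂ * φ v₂) -
        (u₁ * v₂ + θ (max u₁ v₂) * φ u₁ * φ v₂) *
          (u₂ * v₁ + θ (max u₂ v₁) * φ u₂ * φ v₁) ≥ 0) ↔
      (∀ v ∈ Set.Icc (0:ℝ) 1,
        AntitoneOn (fun u => (u * v + θ (max u v) * φ u * φ v) / u) (Set.Ioc 0 1)) :=
  stmt9_general θ φ hθ hφ hφiso hC
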